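/- Let δ > 0 and let f : (t₀,∞) → ℝ be differentiable with |f'(t) + δ·f(t)/t| ≤ h(t)/t^ε for a nonnegative integrable function h and 0 < ε ≤ δ. If the limit f_∞ := lim_{t→∞} |f(t)| exists and is positive, then ∫_t^∞ (δ·f_∞/s) ds diverges while |f_∞ − |f(T)|| remains bounded, a contradiction; hence lim_{t→∞} f(t) = 0. -/

import Mathlib

open MeasureTheory Set Filter

/-! If `|f| → L > 0`, then eventually `|f| > L / 2`; there `f` does not vanish, so `|f|` is
differentiable with `|f|' = sign f · f' ≤ |h| - δ |f| / t ≤ |h| - (δ L / 2) / t` (using `t ^ ε ≥ 1`).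
Integrating from `T` to `b` gives `|f b| ≤ |f T| + ‖h‖₁ - (δ L / 2) log (b / T) → -∞`,
which is absurd. -/

theorem sign_mul_add_mul_abs_le_abs (a c y : ℝ) : SignType.sign y * a + c * |y| ≤ |a + c * y| := by
  rw [← sign_mul_self y]
  rcases lt_trichotomy y 0 with hy | rfl | hy
  · simp only [sign_neg hy, SignType.coe_neg, SignType.coe_one]
    linarith [neg_abs_le (a + c * y)]
  · simp
  · simp only [sign_pos hy, SignType.coe_one]
    linarith [le_abs_self (a + c * y)]

theorem le_add_integral_sub_mul_log_of_hasDerivAt {g g' k : ℝ → ℝ} {a b c : ℝ} (ha : 0 < a)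
    (hab : a ≤ b) (hk : IntegrableOn k (Icc a b)) (hg : ∀ x ∈ Icc a b, HasDerivAt g (g' x) x)
    (hg' : ∀ x ∈ Ioo a b, g' x ≤ k x - c / x) :
    g b ≤ g a + (∫ x in a..b, k x) - c * Real.log (b / a) := by
  have h0 : (0 : ℝ) ∉ uIcc a b := by
    rw [uIcc_of_le hab]; exact fun h => ha.not_ge h.1
  have hinv : ContinuousOn (fun x => c / x) (Icc a b) :=
    continuousOn_const.div continuousOn_id fun x hx => (ha.trans_le hx.1).ne'
  have hk' : IntervalIntegrable k volume a b := (uIcc_of_le hab ▸ hk).intervalIntegrable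
  have hinv' : IntervalIntegrable (fun x => c / x) volume a b :=
    (uIcc_of_le hab ▸ hinv).intervalIntegrable
  have hFTC := intervalIntegral.sub_le_integral_of_hasDeriv_right_of_le hab
    (fun x hx => (hg x hx).continuousAt.continuousWithinAt)
    (fun x hx => (hg x (Ioo_subset_Icc_self hx)).hasDerivWithinAt)
    (hk.sub (hinv.integrableOn_compact isCompact_Icc)) hg'
  simp only [Pi.sub_apply] at hFTC
  rw [intervalIntegral.integral_sub hk' hinv'] at hFTC
  simp only [div_eq_mul_inv c, intervalIntegral.integral_const_mul, integral_inv h0] at hFTC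
  linarith

theorem tendsto_atBot_of_hasDerivAt_le_sub_div {g g' k : ℝ → ℝ} {a c : ℝ} (ha : 0 < a)
    (hc : 0 < c) (hk : IntegrableOn k (Ici a)) (hg : ∀ x ∈ Ici a, HasDerivAt g (g' x) x)
    (hg' : ∀ x ∈ Ioi a, g' x ≤ k x - c / x) :
    Tendsto g atTop atBot := by
  set C := ∫ x in Ici a, ‖k x‖
  have hbound : ∀ b ≥ a, g b ≤ g a + C - c * Real.log (b / a) := by
    intro b hab
    have hkb : ∫ x in a..b, k x ≤ C :=
      calc ∫ x in a..b, k x ≤ ∫ x in a..b, ‖k x‖ :=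
            (Real.le_norm_self _).trans (intervalIntegral.norm_integral_le_integral_norm hab)
        _ = ∫ x in Ioc a b, ‖k x‖ := intervalIntegral.integral_of_le hab
        _ ≤ C := setIntegral_mono_set hk.norm (Eventually.of_forall fun _ => norm_nonneg _)
            (Ioc_subset_Ioi_self.trans Ioi_subset_Ici_self).eventuallyLE
    have := le_add_integral_sub_mul_log_of_hasDerivAt ha hab (hk.mono_set Icc_subset_Ici_self)
      (fun x hx => hg x hx.1) (fun x hx => hg' x hx.1)
    linarith
  have hlog : Tendsto (fun b => c * Real.log (b / a)) atTop atTop :=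
    (Real.tendsto_log_atTop.comp (tendsto_id.atTop_div_const ha)).const_mul_atTop hc
  refine tendsto_atBot_mono' atTop (eventually_ge_atTop a |>.mono hbound) ?_
  simpa only [sub_eq_add_neg, Function.comp_def] using
    tendsto_atBot_add_const_left _ (g a + C) (tendsto_neg_atTop_atBot.comp hlog)

theorem stmt_2_general (δ ε t₀ L : ℝ) (hδ : 0 < δ) (hε0 : 0 < ε)
    (h f : ℝ → ℝ)
    (hh_int : IntegrableOn h (Ici t₀))
    (hf_diff : ∀ t ∈ Ioi t₀, DifferentiableAt ℝ f t)
    (hf_ode : ∀ t ∈ Ioi t₀, |deriv f t + δ * f t / t| ≤ h t / t ^ ε)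
    (hf_lim : Tendsto (fun t => |f t|) atTop (nhds L)) :
    L = 0 ∧ Tendsto f atTop (nhds 0) := by
  have hL : L = 0 := by
    refine le_antisymm (not_lt.1 fun hL => ?_) (ge_of_tendsto' hf_lim fun t => abs_nonneg _)
    obtain ⟨T, hT⟩ := eventually_atTop.1 <| (hf_lim.eventually (lt_mem_nhds (half_lt_self hL))).and
      ((eventually_gt_atTop t₀).and (eventually_ge_atTop 1))
    have hderiv : ∀ t ∈ Ici T, HasDerivAt (fun t => |f t|) (SignType.sign (f t) * deriv f t) t :=
      fun t ht => (hasDerivAt_abs (abs_pos.1 (by linarith [(hT t ht).1]))).comp t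
        (hf_diff t (hT t ht).2.1).hasDerivAt
    have hbound : ∀ t ∈ Ioi T, SignType.sign (f t) * deriv f t ≤ |h t| - δ * (L / 2) / t := by
      intro t ht
      obtain ⟨hft, ht₀, ht1⟩ := hT t ht.le
      have ht0 : 0 < t := by linarith
      have hh : h t / t ^ ε ≤ |h t| :=
        (div_le_div_of_nonneg_right (le_abs_self _) (by positivity)).trans
          (div_le_self (abs_nonneg _) (Real.one_le_rpow ht1 hε0.le))
      have hsign := sign_mul_add_mul_abs_le_abs (deriv f t) (δ / t) (f t)
      have hL2 : δ * (L / 2) / t ≤ δ * |f t| / t := by gcongr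
      rw [div_mul_eq_mul_div, ← mul_div_right_comm] at hsign
      linarith [hf_ode t ht₀]
    have hh_int' : IntegrableOn (fun t => |h t|) (Ici T) :=
      (hh_int.mono_set (Ici_subset_Ici.2 (hT T le_rfl).2.1.le)).norm
    exact not_tendsto_nhds_of_tendsto_atBot
      (tendsto_atBot_of_hasDerivAt_le_sub_div (by linarith [(hT T le_rfl).2.2]) (by positivity)
        hh_int' hderiv hbound) L hf_lim
  exact ⟨hL, (tendsto_zero_iff_abs_tendsto_zero f).2 (hL ▸ hf_lim)⟩

/-- **Key contradiction step of the ODE asymptotic lemma.**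
Let `δ > 0`, `0 < ε ≤ δ`, and let `f` be differentiable on `(t₀,∞)` with
`|f'(t) + δ f(t)/t| ≤ h(t)/t^ε` for a nonnegative integrable `h`.
If the limit `L = lim_{t→∞} |f(t)|` exists, then it cannot be positive
(integrating the differential inequality against the divergent integral `∫ ds/s`
yields a contradiction); hence `L = 0` and `lim_{t→∞} f(t) = 0`. -/
theorem stmt_2 (δ ε t₀ L : ℝ) (hδ : 0 < δ) (hε0 : 0 < ε) (hε : ε ≤ δ)
    (h f : ℝ → ℝ)
    (hh_int : IntegrableOn h (Ici t₀))
    (hh_nonneg : ∀ t ∈ Ici t₀, 0 ≤ h t)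
    (hf_diff : ∀ t ∈ Ioi t₀, DifferentiableAt ℝ f t)
    (hf_ode : ∀ t ∈ Ioi t₀, |deriv f t + δ * f t / t| ≤ h t / t ^ ε)
    (hf_lim : Tendsto (fun t => |f t|) atTop (nhds L)) :
    L = 0 ∧ Tendsto f atTop (nhds 0) :=
  stmt_2_general δ ε t₀ L hδ hε0 h f hh_int hf_diff hf_ode hf_lim
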